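/- Let P be a finite set of ground ASP rules and ⟨P⟩ its translation to a finite-choice logic program. For every solution D of ⟨P⟩, the set { p : (p is tt) ∈ D } is a stable model of P. -/

import Mathlib

open scoped Classical

namespace FCLP

/-! ### Terms -/

/-- Ground (Herbrand) terms: uninterpreted function symbols applied to ground terms. -/
inductive GTerm : Type where
  | func : ℕ → List GTerm → GTerm

/-- Terms possibly containing variables. -/
inductive VTerm : Type where
  | var : ℕ → VTerm
  | func : ℕ → List VTerm → VTerm

/-- A substitution is a total map from variables to ground terms. -/
abbrev Subst := ℕ → GTerm

mutual
  /-- Applying a substitution to a term. -/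
  def VTerm.subst (σ : Subst) : VTerm → GTerm
    | .var x => σ x
    | .func f args => .func f (VTerm.substList σ args)
  def VTerm.substList (σ : Subst) : List VTerm → List GTerm
    | [] => []
    | t :: ts => VTerm.subst σ t :: VTerm.substList σ ts
end

/-- The variable `x` occurs in the term. -/
inductive VTerm.HasVar : VTerm → ℕ → Prop where
  | var (x : ℕ) : VTerm.HasVar (.var x) x
  | func {f : ℕ} {args : List VTerm} {t : VTerm} {x : ℕ} :
      t ∈ args → VTerm.HasVar t x → VTerm.HasVar (.func f args) x

/-! ### Attributes, facts, rules, programs -/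

/-- An attribute `p(t₁,...,tₙ)`: a predicate applied to ground terms. -/
structure Attr where
  pred : ℕ
  args : List GTerm

/-- A fact `p(t̄) is v`. -/
structure Fact where
  attr : Attr
  value : GTerm

/-- A premise `p(t̄) is v`, possibly containing variables. -/
structure VAtom where
  pred : ℕ
  args : List VTerm
  value : VTerm

def VAtom.subst (σ : Subst) (A : VAtom) : Fact :=
  ⟨⟨A.pred, A.args.map (VTerm.subst σ)⟩, A.value.subst σ⟩

def VAtom.HasVar (A : VAtom) (x : ℕ) : Prop :=
  (∃ t ∈ A.args, t.HasVar x) ∨ A.value.HasVar x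

/-- A rule head: open `p(t̄) is? v` or closed `p(t̄) is {v₁,...,vₘ}`. -/
inductive Head : Type where
  | opn : ℕ → List VTerm → VTerm → Head
  | closed : ℕ → List VTerm → List VTerm → Head

def Head.HasVar : Head → ℕ → Prop
  | .opn _ args v, x => (∃ t ∈ args, t.HasVar x) ∨ v.HasVar x
  | .closed _ args vs, x => (∃ t ∈ args, t.HasVar x) ∨ ∃ v ∈ vs, v.HasVar x

/-- The ground attribute of a rule head under a substitution. -/
def Head.groundAttr (σ : Subst) : Head → Attr
  | .opn p args _ => ⟨p, args.map (VTerm.subst σ)⟩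
  | .closed p args _ => ⟨p, args.map (VTerm.subst σ)⟩

/-- A rule `H ← F` with a finite collection of premises. -/
structure Rule where
  head : Head
  prems : List VAtom

/-- Wellformedness: closed heads offer at least one value, and every
variable in the head occurs in a premise. -/
def Rule.WF (r : Rule) : Prop :=
  (∀ x, r.head.HasVar x → ∃ A ∈ r.prems, A.HasVar x) ∧
  (∀ p args vs, r.head = .closed p args vs → vs ≠ [])

/-- A program is a set of rules. -/
abbrev Program := Set Rule

/-- A program is a *finite* set of *wellformed* rules. -/
def Program.WFP (P : Program) : Prop := P.Finite ∧ ∀ r ∈ P, r.WF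

/-! ### Fact-set semantics -/

/-- A set of facts is consistent when each attribute has at most one value. -/
def Consistent (D : Set Fact) : Prop :=
  ∀ f ∈ D, ∀ g ∈ D, f.attr = g.attr → f = g

/-- `σ` satisfies the premises `F` in the fact-set database `D`. -/
def satF (σ : Subst) (F : List VAtom) (D : Set Fact) : Prop :=
  ∀ A ∈ F, A.subst σ ∈ D

/-- Fact-set evolution `D →_P S`. -/
inductive Evolve (P : Program) : Set Fact → Set (Set Fact) → Prop where
  | triv (D : Set Fact) : Evolve P D {D}
  | closed {D : Set Fact} {r : Rule} {p : ℕ} {args vs : List VTerm} {σ : Subst} :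
      r ∈ P → r.head = .closed p args vs → satF σ r.prems D →
      Evolve P D
        { E | ∃ v ∈ vs,
            E = insert (⟨⟨p, args.map (VTerm.subst σ)⟩, VTerm.subst σ v⟩ : Fact) D ∧
            Consistent E }
  | opn {D : Set Fact} {r : Rule} {p : ℕ} {args : List VTerm} {v : VTerm} {σ : Subst} :
      r ∈ P → r.head = .opn p args v → satF σ r.prems D →
      Evolve P D
        ({D} ∪ { E | E = insert (⟨⟨p, args.map (VTerm.subst σ)⟩, VTerm.subst σ v⟩ : Fact) D ∧
                     Consistent E })

/-- `P` allows `D` to step to `D'`. -/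
def Step (P : Program) (D D' : Set Fact) : Prop := ∃ S, Evolve P D S ∧ D' ∈ S

/-- A database is saturated when its only evolution is the singleton of itself. -/
def Saturated (P : Program) (D : Set Fact) : Prop := ∀ S, Evolve P D S → S = {D}

/-- A solution: a saturated database reachable from `∅` by a (finite) step sequence. -/
def Solution (P : Program) (D : Set Fact) : Prop :=
  Relation.ReflTransGen (Step P) ∅ D ∧ Saturated P D

/-! ### Constraints and constraint databases -/

/-- A constraint: `just t` or `noneOf X`. -/
inductive Constraint : Type where
  | just : GTerm → Constraint
  | noneOf : Set GTerm → Constraint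

/-- The order on constraints. -/
def Constraint.le : Constraint → Constraint → Prop
  | .noneOf X, .noneOf Y => X ⊆ Y
  | .noneOf X, .just t => t ∉ X
  | .just t, .just t' => t = t'
  | .just _, .noneOf _ => False

instance : LE Constraint := ⟨Constraint.le⟩

/-- Least upper bound of a (compatible) set of constraints: if some `just t` is present
it is the lub; otherwise it is `noneOf` of the union. -/
noncomputable def Constraint.lub (C : Set Constraint) : Constraint :=
  if h : ∃ t, Constraint.just t ∈ C then .just h.choose
  else .noneOf (⋃₀ { X | Constraint.noneOf X ∈ C })

/-- A constraint database: a map from ground attributes to constraints,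
ordered pointwise (via the `Pi` order). -/
abbrev CDB := Attr → Constraint

/-- The least constraint database: every attribute maps to `noneOf ∅`. -/
def cdbBot : CDB := fun _ => .noneOf ∅

/-- Pointwise least upper bound of a (compatible) set of constraint databases. -/
noncomputable def CDB.lub (S : Set CDB) : CDB :=
  fun a => Constraint.lub ((fun Δ => Δ a) '' S)

/-- A subset of a poset is compatible when it has an upper bound. -/
def Compatible {α : Type*} [LE α] (X : Set α) : Prop := ∃ y, ∀ x ∈ X, x ≤ y

/-- Binary compatibility. -/
def Compat {α : Type*} [LE α] (x y : α) : Prop := Compatible ({x, y} : Set α)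

/-- A choice set: a pairwise-incompatible set of constraint databases. -/
def IsChoiceSet (𝒞 : Set CDB) : Prop :=
  ∀ D ∈ 𝒞, ∀ E ∈ 𝒞, Compat D E → D = E

/-- The order on choice sets. -/
def ChoiceLE (𝒞₁ 𝒞₂ : Set CDB) : Prop :=
  ∀ D₂ ∈ 𝒞₂, ∃ D₁ ∈ 𝒞₁, D₁ ≤ D₂

/-- Least upper bound of an indexed family of choice sets:
`⋁ᵢ 𝒞ᵢ = { ⋁ Im(f) : f ∈ ∏ᵢ 𝒞ᵢ, Im(f) compatible }`. -/
noncomputable def ChoiceJoin {I : Type*} (𝒞 : I → Set CDB) : Set CDB :=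
  { E | ∃ f : I → CDB, (∀ i, f i ∈ 𝒞 i) ∧ Compatible (Set.range f) ∧
        E = CDB.lub (Set.range f) }

/-- Least upper bound of a set of choice sets. -/
noncomputable def ChoiceSJoin (S : Set (Set CDB)) : Set CDB :=
  ChoiceJoin (fun C : S => (C : Set CDB))

/-- Greatest lower bound of a set of choice sets:
`⋀ X = ⋁ {𝒞 : ∀ x ∈ X, 𝒞 ≤ x}` (join over choice-set lower bounds). -/
noncomputable def ChoiceMeet (S : Set (Set CDB)) : Set CDB :=
  ChoiceSJoin { C | IsChoiceSet C ∧ ∀ X ∈ S, ChoiceLE C X }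

/-! ### Immediate consequence -/

/-- `σ` satisfies `F` in the constraint database `Δ`. -/
def satC (σ : Subst) (F : List VAtom) (Δ : CDB) : Prop :=
  ∀ A ∈ F, Constraint.just (A.value.subst σ) ≤ Δ ⟨A.pred, A.args.map (VTerm.subst σ)⟩

/-- The constraint database mapping `a` to `c` and every other attribute to `noneOf ∅`. -/
noncomputable def unitCDB (a : Attr) (c : Constraint) : CDB :=
  fun a' => if a' = a then c else .noneOf ∅

/-- The choice set `⟨σH⟩` determined by a ground rule head. -/
noncomputable def headChoice (σ : Subst) : Head → Set CDB
  | .opn p args v =>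
      { unitCDB ⟨p, args.map (VTerm.subst σ)⟩ (.just (v.subst σ)),
        unitCDB ⟨p, args.map (VTerm.subst σ)⟩ (.noneOf {v.subst σ}) }
  | .closed p args vs =>
      { Δ | ∃ v ∈ vs, Δ = unitCDB ⟨p, args.map (VTerm.subst σ)⟩ (.just (v.subst σ)) }

/-- The immediate consequence operator
`T_P(Δ) = {Δ} ∨ ⋁{ ⟨σH⟩ : (H ← F) ∈ P, σ satisfies F in Δ }`. -/
noncomputable def TP (P : Program) (Δ : CDB) : Set CDB :=
  ChoiceSJoin
    (insert {Δ} { C | ∃ r ∈ P, ∃ σ : Subst, satC σ r.prems Δ ∧ C = headChoice σ r.head })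

/-- The attribute-specific immediate consequence operator `T_{P[a]}`. -/
noncomputable def TPa (P : Program) (a : Attr) (Δ : CDB) : Set CDB :=
  ChoiceSJoin
    { C | ∃ r ∈ P, ∃ σ : Subst, satC σ r.prems Δ ∧ r.head.groundAttr σ = a ∧
          C = headChoice σ r.head }

/-- The lifted immediate consequence operator `T_P*(𝒞) = ⋃_{Δ ∈ 𝒞} T_P(Δ)`. -/
noncomputable def TPs (P : Program) (𝒞 : Set CDB) : Set CDB :=
  { E | ∃ Δ ∈ 𝒞, E ∈ TP P Δ }

/-- The least fixed point of `T_P*`, defined à la Knaster–Tarski as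
`⋀ {𝒞 : T_P*(𝒞) ≤ 𝒞}`. -/
noncomputable def lfpTPs (P : Program) : Set CDB :=
  ChoiceMeet { C | IsChoiceSet C ∧ ChoiceLE (TPs P C) C }

/-! ### Positive and finite constraint databases, promotion and erasure -/

/-- A constraint database is positive when `noneOf X` only occurs with `X = ∅`. -/
def CDBPositive (Δ : CDB) : Prop := ∀ a X, Δ a = .noneOf X → X = ∅

/-- A constraint database is finite. -/
def CDBFinite (Δ : CDB) : Prop :=
  { a | Δ a ≠ .noneOf ∅ }.Finite ∧ ∀ a X, Δ a = .noneOf X → X.Finite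

/-- Promotion of a (consistent) fact set to a constraint database. -/
noncomputable def promote (D : Set Fact) : CDB :=
  fun a => if h : ∃ v, (⟨a, v⟩ : Fact) ∈ D then .just h.choose else .noneOf ∅

/-- Erasure of a constraint database to a fact set. -/
def eraseCDB (Δ : CDB) : Set Fact := { f | Δ f.attr = .just f.value }

/-! ### The abstract algorithm -/

/-- `P` allows `Δ` to take an algorithmic step to any `Δ' ∈ {Δ} ∨ T_{P[a]}(Δ)`
for some attribute `a`, provided `T_P(Δ) ≠ ∅`. -/
noncomputable def AlgStep (P : Program) (Δ Δ' : CDB) : Prop :=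
  TP P Δ ≠ ∅ ∧ ∃ a : Attr, Δ' ∈ ChoiceSJoin {({Δ} : Set CDB), TPa P a Δ}

/-! ### Datalog -/

/-- A datalog atom, possibly with variables. -/
structure DAtom where
  pred : ℕ
  args : List VTerm

/-- A ground datalog atom. -/
structure GAtom where
  pred : ℕ
  args : List GTerm

def DAtom.subst (σ : Subst) (A : DAtom) : GAtom := ⟨A.pred, A.args.map (VTerm.subst σ)⟩

/-- A datalog rule `p(t̄) ← p₁(t̄₁), ..., pₙ(t̄ₙ)`. -/
structure DRule where
  head : DAtom
  prems : List DAtom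

/-- Every variable of the head appears in a premise. -/
def DRule.WF (r : DRule) : Prop :=
  ∀ x, (∃ t ∈ r.head.args, t.HasVar x) → ∃ A ∈ r.prems, ∃ t ∈ A.args, t.HasVar x

/-- The datalog immediate consequence operator. -/
def dImmCons (P : Set DRule) (X : Set GAtom) : Set GAtom :=
  { g | ∃ r ∈ P, ∃ σ : Subst, (∀ A ∈ r.prems, A.subst σ ∈ X) ∧ g = r.head.subst σ }

/-- The least model of a datalog program: the least fixed point of `dImmCons`. -/
def dModel (P : Set DRule) : Set GAtom := ⋂₀ { X | dImmCons P X ⊆ X }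

/-- Translation of a datalog program to a finite-choice logic program, using the
constant with (fresh) function symbol `u` as the value `unit`. -/
def trDatalog (u : ℕ) (P : Set DRule) : Program :=
  { r | ∃ dr ∈ P,
      r = ⟨Head.closed dr.head.pred dr.head.args [VTerm.func u []],
           dr.prems.map (fun A => ⟨A.pred, A.args, VTerm.func u []⟩)⟩ }

/-! ### Answer set programming -/

/-- A ground ASP rule `p ← p₁,...,pₙ, ¬q₁,...,¬qₘ` over propositional atoms. -/
structure ASPRule where
  head : ℕ
  pos : List ℕ
  neg : List ℕ

/-- One step of the immediate consequence operator of the reduct `P^X`. -/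
def reductCons (P : Set ASPRule) (X : Set ℕ) (Y : Set ℕ) : Set ℕ :=
  { p | ∃ r ∈ P, r.head = p ∧ (∀ q ∈ r.pos, q ∈ Y) ∧ (∀ q ∈ r.neg, q ∉ X) }

/-- The least model of the reduct `P^X`. -/
def reductModel (P : Set ASPRule) (X : Set ℕ) : Set ℕ :=
  ⋂₀ { Y | reductCons P X Y ⊆ Y }

/-- `X` is a stable model of `P` when the least model of the reduct `P^X` equals `X`. -/
def StableModel (P : Set ASPRule) (X : Set ℕ) : Prop := reductModel P X = X

/-- The fresh constant `tt` (as a ground term). -/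
def ttT : GTerm := .func 0 []
/-- The fresh constant `ff` (as a ground term). -/
def ffT : GTerm := .func 1 []
/-- The constant `tt` as a (closed) term of the rule language. -/
def ttV : VTerm := .func 0 []
/-- The constant `ff` as a (closed) term of the rule language. -/
def ffV : VTerm := .func 1 []

/-- The premise `p is tt`. -/
def posPrem (p : ℕ) : VAtom := ⟨p, [], ttV⟩
/-- The premise `q is ff`. -/
def negPrem (q : ℕ) : VAtom := ⟨q, [], ffV⟩

/-- Translation of an ASP program to a finite-choice logic program: each rule
`p ← p₁,...,pₙ, ¬q₁,...,¬qₘ` becomes `m` open rules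
`qⱼ is? ff ← p₁ is tt,...,pₙ is tt, q₁ is ff,...,q_{j-1} is ff` and one closed rule
`p is {tt} ← p₁ is tt,...,pₙ is tt, q₁ is ff,...,qₘ is ff`. -/
def trASP (P : Set ASPRule) : Program :=
  { r | ∃ ar ∈ P,
      (∃ j : Fin ar.neg.length,
        r = ⟨Head.opn (ar.neg.get j) [] ffV,
             ar.pos.map posPrem ++ (ar.neg.take j.val).map negPrem⟩) ∨
      r = ⟨Head.closed ar.head [] [ttV],
           ar.pos.map posPrem ++ ar.neg.map negPrem⟩ }

/-! Let `X` be the set of atoms `p` with `p is tt` in a solution `D`. Every database reachable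
from `∅` consists of facts `p is tt` and `q is ff` and is consistent, so no atom is both.

`X` is closed under the consequence operator of the reduct `P^X`: if the positive body of a
rule lies in `X` and its negated atoms lie outside `X`, then saturation forces the open rules,
one after the other, to have recorded `q is ff` for every negated atom `q` (adding it is
consistent because `q is tt ∉ D`), after which saturation of the closed rule puts the head
into `X`.

Conversely, every `p is tt` is added along the step sequence by a closed rule whose positive
premises were already true and whose negated atoms were already `ff`, hence outside `X`; so by
induction on the sequence, `X` is contained in every set closed under the reduct's operator. -/

lemma consistent_insert {D : Set Fact} {f : Fact} (hD : Consistent D)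
    (hf : ∀ g ∈ D, g.attr = f.attr → g = f) : Consistent (insert f D) := by
  rintro g (rfl | hg) g' (rfl | hg') hattr
  · rfl
  · exact (hf g' hg' hattr.symm).symm
  · exact hf g hg hattr
  · exact hD g hg g' hg' hattr

lemma Step.subset {P : Program} {D D' : Set Fact} (h : Step P D D') : D ⊆ D' := by
  obtain ⟨S, hev, hmem⟩ := h
  cases hev with
  | triv => exact (Set.mem_singleton_iff.mp hmem).ge
  | closed =>
    obtain ⟨_, _, rfl, _⟩ := hmem
    exact Set.subset_insert _ _
  | opn =>
    rcases hmem with hmem | ⟨rfl, _⟩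
    · exact (Set.mem_singleton_iff.mp hmem).ge
    · exact Set.subset_insert _ _

lemma Saturated.mem_of_opn {P : Program} {D : Set Fact} (hD : Saturated P D) {r : Rule}
    {p : ℕ} {args : List VTerm} {v : VTerm} {σ : Subst} (hr : r ∈ P)
    (hh : r.head = .opn p args v) (hsat : satF σ r.prems D)
    (hcons : Consistent (insert ⟨⟨p, args.map (VTerm.subst σ)⟩, v.subst σ⟩ D)) :
    (⟨⟨p, args.map (VTerm.subst σ)⟩, v.subst σ⟩ : Fact) ∈ D := by
  rw [← Set.insert_eq_self, ← Set.mem_singleton_iff, ← hD _ (Evolve.opn hr hh hsat)]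
  exact Or.inr ⟨rfl, hcons⟩

lemma Saturated.exists_mem_of_closed {P : Program} {D : Set Fact} (hD : Saturated P D)
    {r : Rule} {p : ℕ} {args vs : List VTerm} {σ : Subst} (hr : r ∈ P)
    (hh : r.head = .closed p args vs) (hsat : satF σ r.prems D) :
    ∃ v ∈ vs, (⟨⟨p, args.map (VTerm.subst σ)⟩, v.subst σ⟩ : Fact) ∈ D := by
  have hmem : D ∈ { E | ∃ v ∈ vs,
      E = insert (⟨⟨p, args.map (VTerm.subst σ)⟩, VTerm.subst σ v⟩ : Fact) D ∧
      Consistent E } :=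
    (hD _ (Evolve.closed hr hh hsat)).symm ▸ rfl
  obtain ⟨v, hv, hE, -⟩ := hmem
  exact ⟨v, hv, Set.insert_eq_self.mp hE.symm⟩

def ttFact (p : ℕ) : Fact := ⟨⟨p, []⟩, ttT⟩

def ffFact (q : ℕ) : Fact := ⟨⟨q, []⟩, ffT⟩

def trueAtoms (D : Set Fact) : Set ℕ := { p | ttFact p ∈ D }

def TwoValued (D : Set Fact) : Prop := ∀ f ∈ D, ∃ p, f = ttFact p ∨ f = ffFact p

@[simp] lemma subst_ttV (σ : Subst) : ttV.subst σ = ttT := by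
  simp [ttV, ttT, VTerm.subst, VTerm.substList]

@[simp] lemma subst_ffV (σ : Subst) : ffV.subst σ = ffT := by
  simp [ffV, ffT, VTerm.subst, VTerm.substList]

@[simp] lemma ttFact_ne_ffFact (p q : ℕ) : ttFact p ≠ ffFact q := by
  simp [ttFact, ffFact, ttT, ffT]

lemma satF_translatedPrems (σ : Subst) (ps qs : List ℕ) (D : Set Fact) :
    satF σ (ps.map posPrem ++ qs.map negPrem) D ↔
      (∀ p ∈ ps, ttFact p ∈ D) ∧ ∀ q ∈ qs, ffFact q ∈ D := by
  simp [satF, VAtom.subst, posPrem, negPrem, ttFact, ffFact, or_imp, forall_and]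

lemma trueAtoms_insert_ttFact (p : ℕ) (D : Set Fact) :
    trueAtoms (insert (ttFact p) D) = insert p (trueAtoms D) := by
  ext q
  simp [trueAtoms, ttFact]

lemma trueAtoms_insert_ffFact (q : ℕ) (D : Set Fact) :
    trueAtoms (insert (ffFact q) D) = trueAtoms D := by
  ext p
  simp [trueAtoms]

lemma Consistent.ttFact_notMem {D : Set Fact} (hD : Consistent D) {q : ℕ}
    (hq : ffFact q ∈ D) : ttFact q ∉ D :=
  fun htt => ttFact_ne_ffFact q q (hD _ htt _ hq rfl)

lemma Consistent.insert_ffFact {D : Set Fact} (hD : Consistent D) (h2 : TwoValued D) {q : ℕ}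
    (hq : ttFact q ∉ D) : Consistent (insert (ffFact q) D) := by
  refine consistent_insert hD fun g hg hattr => ?_
  obtain ⟨p, rfl | rfl⟩ := h2 g hg <;> simp only [ttFact, ffFact, Attr.mk.injEq] at hattr <;>
    obtain ⟨rfl, -⟩ := hattr
  · exact absurd hg hq
  · rfl

lemma step_trASP_cases {P : Set ASPRule} {E E' : Set Fact} (h : Step (trASP P) E E') :
    E' = E ∨
    (∃ q, E' = insert (ffFact q) E ∧ Consistent E') ∨
    (∃ ar ∈ P, (∀ p ∈ ar.pos, ttFact p ∈ E) ∧ (∀ q ∈ ar.neg, ffFact q ∈ E) ∧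
      E' = insert (ttFact ar.head) E ∧ Consistent E') := by
  obtain ⟨S, hev, hmem⟩ := h
  cases hev with
  | triv => exact Or.inl hmem
  | closed hr hh hsat =>
    obtain ⟨ar, har, ⟨j, rfl⟩ | rfl⟩ := hr
    · cases hh
    · cases hh
      obtain ⟨v, hv, rfl, hcons⟩ := hmem
      rw [List.mem_singleton] at hv
      subst hv
      rw [satF_translatedPrems] at hsat
      exact Or.inr (Or.inr ⟨ar, har, hsat.1, hsat.2, by simp [ttFact], hcons⟩)
  | opn hr hh _ =>
    obtain ⟨ar, har, ⟨j, rfl⟩ | rfl⟩ := hr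
    · cases hh
      rcases hmem with hmem | ⟨rfl, hcons⟩
      · exact Or.inl hmem
      · exact Or.inr (Or.inl ⟨ar.neg[j], by simp [ffFact], hcons⟩)
    · cases hh

lemma reachable_trASP {P : Set ASPRule} {E : Set Fact}
    (h : Relation.ReflTransGen (Step (trASP P)) ∅ E) : Consistent E ∧ TwoValued E := by
  induction h with
  | refl => simp [Consistent, TwoValued]
  | tail _ hstep ih =>
    rcases step_trASP_cases hstep with rfl | ⟨q, rfl, hcons⟩ | ⟨ar, -, -, -, rfl, hcons⟩
    · exact ih
    · exact ⟨hcons, by rintro f (rfl | hf); exacts [⟨q, Or.inr rfl⟩, ih.2 f hf]⟩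
    · exact ⟨hcons, by rintro f (rfl | hf); exacts [⟨ar.head, Or.inl rfl⟩, ih.2 f hf]⟩

lemma Solution.ffFact_mem_of_neg {P : Set ASPRule} {D : Set Fact} (hD : Solution (trASP P) D)
    {ar : ASPRule} (har : ar ∈ P) (hpos : ∀ p ∈ ar.pos, ttFact p ∈ D)
    (hneg : ∀ q ∈ ar.neg, ttFact q ∉ D) : ∀ q ∈ ar.neg, ffFact q ∈ D := by
  obtain ⟨hcons, h2⟩ := reachable_trASP hD.1
  suffices h : ∀ j, ∀ q ∈ ar.neg.take j, ffFact q ∈ D by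
    simpa using h ar.neg.length
  intro j
  induction j with
  | zero => simp
  | succ j ih =>
    intro q hq
    rw [List.take_add_one, List.mem_append] at hq
    rcases hq with hq | hq
    · exact ih q hq
    rw [Option.mem_toList, List.getElem?_eq_some_iff] at hq
    obtain ⟨hj, rfl⟩ := hq
    have hr : (⟨.opn ar.neg[j] [] ffV, ar.pos.map posPrem ++ (ar.neg.take j).map negPrem⟩ :
        Rule) ∈ trASP P := ⟨ar, har, Or.inl ⟨⟨j, hj⟩, rfl⟩⟩
    have hsat := (satF_translatedPrems (fun _ => ttT) _ _ D).2 ⟨hpos, ih⟩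
    simpa [ffFact] using hD.2.mem_of_opn hr rfl hsat
      (by simpa [ffFact] using hcons.insert_ffFact h2 (hneg _ (List.getElem_mem hj)))

lemma Solution.reductCons_trueAtoms_subset {P : Set ASPRule} {D : Set Fact}
    (hD : Solution (trASP P) D) : reductCons P (trueAtoms D) (trueAtoms D) ⊆ trueAtoms D := by
  rintro _ ⟨ar, har, rfl, hpos, hneg⟩
  have hr : (⟨.closed ar.head [] [ttV], ar.pos.map posPrem ++ ar.neg.map negPrem⟩ : Rule) ∈
      trASP P := ⟨ar, har, Or.inr rfl⟩
  have hsat := (satF_translatedPrems (fun _ => ttT) _ _ D).2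
    ⟨hpos, hD.ffFact_mem_of_neg har hpos hneg⟩
  obtain ⟨v, hv, hmem⟩ := hD.2.exists_mem_of_closed hr rfl hsat
  rw [List.mem_singleton] at hv
  subst hv
  simpa [trueAtoms, ttFact] using hmem

lemma trueAtoms_subset_of_reductCons_subset {P : Set ASPRule} {D : Set Fact}
    (hD : Consistent D) {Y : Set ℕ} (hY : reductCons P (trueAtoms D) Y ⊆ Y) {E : Set Fact}
    (hE : Relation.ReflTransGen (Step (trASP P)) ∅ E) (hED : E ⊆ D) : trueAtoms E ⊆ Y := by
  induction hE with
  | refl => simp [trueAtoms]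
  | tail _ hstep ih =>
    have hprev := ih (hstep.subset.trans hED)
    rcases step_trASP_cases hstep with rfl | ⟨q, rfl, -⟩ | ⟨ar, har, hpos, hneg, rfl, -⟩
    · exact hprev
    · rwa [trueAtoms_insert_ffFact]
    · rw [trueAtoms_insert_ttFact]
      refine Set.insert_subset (hY ⟨ar, har, rfl, fun p hp => hprev (hpos p hp), ?_⟩) hprev
      exact fun q hq => hD.ttFact_notMem (hstep.subset.trans hED (hneg q hq))

/-- Completeness of the ASP translation: every solution of `⟨P⟩` yields a stable
model of `P`. -/
theorem asp_translation_complete (P : Set ASPRule) (hfin : P.Finite) (D : Set Fact)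
    (hD : Solution (trASP P) D) :
    StableModel P { p | (⟨⟨p, []⟩, ttT⟩ : Fact) ∈ D } := by
  have hcons : Consistent D := (reachable_trASP hD.1).1
  refine (Set.sInter_subset_of_mem hD.reductCons_trueAtoms_subset).antisymm ?_
  exact Set.subset_sInter fun Y hY =>
    trueAtoms_subset_of_reductCons_subset hcons hY hD.1 subset_rfl

end FCLP
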